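/- (Harsanyi aggregation corollary.) Suppose D¹ and D² are compatible finite-horizon POMDPs that share the same state set S, initial distribution μ, transition probabilities T and observation probabilities Ω, and differ only in their utility functions U¹, U². For w¹, w² ≥ 0 with w¹ + w² = 1, let D_w denote the shared POMDP equipped with the utility function w¹U¹ + w²U². (i) If a full-memory policy π is Pareto-optimal for (D¹,D²), then there exist such weights w¹, w² with the property that for every time i and every history hᵢ having positive probability under π, πᵢ(−|hᵢ) maximizes α ↦ W_{D_w}^π(α,hᵢ) over all α ∈ Δ(A). (ii) If w¹, w² > 0 and πᵢ(−|hᵢ) maximizes α ↦ W_{D_w}^π(α,hᵢ) for every time i and every history hᵢ, then π is Pareto-optimal for (D¹,D²). -/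

import Mathlib

open Finset

/-- A finitely-supported probability distribution, given as a nonnegative real-valued
function summing to `1`. -/
def IsDist {α : Type} [Fintype α] (p : α → ℝ) : Prop :=
  (∀ x, 0 ≤ p x) ∧ ∑ x, p x = 1

/-- A finite-horizon POMDP with states `S`, actions `A`, observations `O` and horizon `n`:
an initial distribution `μ`, transition probabilities `T s a s'` = P(s'|s,a),
observation probabilities `Ω s o` = P(o|s), and a utility function `U` on state
trajectories (not assumed additive over time). -/
structure POMDP (S A O : Type) (n : ℕ) where
  μ : S → ℝ
  T : S → A → S → ℝ
  Ω : S → O → ℝ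
  U : (Fin n → S) → ℝ

/-- The probabilistic data of a POMDP consists of genuine probability distributions. -/
def POMDP.Valid {S A O : Type} {n : ℕ} [Fintype S] [Fintype O] (D : POMDP S A O n) : Prop :=
  IsDist D.μ ∧ (∀ s a, IsDist (D.T s a)) ∧ ∀ s, IsDist (D.Ω s)

/-- A history at (0-indexed) time `i`: observations `o₀, …, o_i` and actions `a₀, …, a_{i-1}`. -/
def Hist (O A : Type) (i : ℕ) : Type := (Fin (i + 1) → O) × (Fin i → A)

/-- A full-memory policy: at each time `i` it assigns to every history a distribution
on actions (given as a real-valued function). -/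
def Policy (O A : Type) (n : ℕ) : Type := ∀ i : Fin n, Hist O A i.val → A → ℝ

/-- A full-memory policy is a genuine policy if every action "distribution" it outputs is
a probability distribution. -/
def IsPolicy {O A : Type} {n : ℕ} [Fintype A] (π : Policy O A n) : Prop :=
  ∀ (i : Fin n) (h : Hist O A i.val), IsDist (π i h)

/-- The history at time `i` extracted from full observation and action sequences. -/
def histOf {O A : Type} {n : ℕ} (o : Fin n → O) (a : Fin n → A) (i : Fin n) :
    Hist O A i.val :=
  (fun k => o ⟨k.val, by have := k.isLt; have := i.isLt; omega⟩,
   fun k => a ⟨k.val, by have := k.isLt; have := i.isLt; omega⟩)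

/-- The probability `P(s̄, ō, ā; π)` of a full trajectory under policy `π`:
`μ(s₁) ∏ᵢ Ω(oᵢ|sᵢ) πᵢ(aᵢ|hᵢ) ∏ᵢ T(sᵢ₊₁|sᵢ,aᵢ)`. -/
noncomputable def trajProb {S A O : Type} {n : ℕ} [NeZero n] (D : POMDP S A O n)
    (π : Policy O A n) (s : Fin n → S) (o : Fin n → O) (a : Fin n → A) : ℝ :=
  D.μ (s 0) *
    (∏ i : Fin n, D.Ω (s i) (o i) * π i (histOf o a i) (a i)) *
    ∏ i : Fin (n - 1),
      D.T (s ⟨i.val, by have := i.isLt; omega⟩) (a ⟨i.val, by have := i.isLt; omega⟩)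
        (s ⟨i.val + 1, by have := i.isLt; omega⟩)

/-- The expected utility `E[U; π]` of a policy `π` in the POMDP `D`. -/
noncomputable def expUtil {S A O : Type} {n : ℕ} [Fintype S] [Fintype A] [Fintype O]
    [NeZero n] (D : POMDP S A O n) (π : Policy O A n) : ℝ :=
  ∑ s : Fin n → S, ∑ o : Fin n → O, ∑ a : Fin n → A, trajProb D π s o a * D.U s

/-- A full-memory policy `π` is Pareto-optimal for the pair `(D1, D2)` of compatible POMDPs
if no other policy can improve one principal's expected utility without strictly
decreasing the other's. -/
def ParetoOptimal {S1 S2 A O : Type} {n : ℕ} [Fintype S1] [Fintype S2] [Fintype A]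
    [Fintype O] [NeZero n] (D1 : POMDP S1 A O n) (D2 : POMDP S2 A O n)
    (π : Policy O A n) : Prop :=
  ∀ π' : Policy O A n, IsPolicy π' →
    (expUtil D1 π' > expUtil D1 π → expUtil D1 π' < expUtil D1 π ∨ expUtil D2 π' < expUtil D2 π) ∧
    (expUtil D2 π' > expUtil D2 π → expUtil D1 π' < expUtil D1 π ∨ expUtil D2 π' < expUtil D2 π)

/-- The mixture POMDP `w1 • D1 + w2 • D2`: flip a `(w1, w2)`-weighted coin `B ∈ {1,2}`,
then run `D^B` forever after.  Its states are pairs `(j, s)` (encoded as `S1 ⊕ S2`),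
the coin's value never changes, and the utility of a trajectory whose component is
constantly `j` is `U^j` of its `S^j`-components. -/
noncomputable def POMDP.mix {S1 S2 A O : Type} {n : ℕ} [Nonempty S1] [Nonempty S2] [NeZero n]
    (w1 w2 : ℝ) (D1 : POMDP S1 A O n) (D2 : POMDP S2 A O n) : POMDP (S1 ⊕ S2) A O n where
  μ := fun js => match js with
    | .inl s => w1 * D1.μ s
    | .inr s => w2 * D2.μ s
  T := fun js a js' => match js, js' with
    | .inl s, .inl s' => D1.T s a s'
    | .inr s, .inr s' => D2.T s a s'
    | .inl _, .inr _ => 0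
    | .inr _, .inl _ => 0
  Ω := fun js o => match js with
    | .inl s => D1.Ω s o
    | .inr s => D2.Ω s o
  U := fun sb => match sb 0 with
    | .inl _ => D1.U fun i => match sb i with
        | .inl s => s
        | .inr _ => Classical.arbitrary S1
    | .inr _ => D2.U fun i => match sb i with
        | .inr s => s
        | .inl _ => Classical.arbitrary S2

/-- `P(o_{≤i} | Do(a_{<i}))`: the probability of the observations in the history `h`,
causally conditioned on its actions. -/
noncomputable def doProb {S A O : Type} {n : ℕ} [Fintype S] (D : POMDP S A O n)
    (i : Fin n) (h : Hist O A i.val) : ℝ :=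
  ∑ s : Fin (i.val + 1) → S,
    D.μ (s 0) * (∏ k : Fin (i.val + 1), D.Ω (s k) (h.1 k)) *
      ∏ k : Fin i.val, D.T (s k.castSucc) (h.2 k) (s k.succ)

/-- `(o, a)` extends the history `h` at time `i` if they agree with its recorded
observations and actions. -/
def ExtendsHist {O A : Type} {n : ℕ} (i : Fin n) (h : Hist O A i.val)
    (o : Fin n → O) (a : Fin n → A) : Prop :=
  (∀ k : Fin (i.val + 1), o ⟨k.val, by have := k.isLt; have := i.isLt; omega⟩ = h.1 k) ∧
  (∀ k : Fin i.val, a ⟨k.val, by have := k.isLt; have := i.isLt; omega⟩ = h.2 k)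

instance {O A : Type} {n : ℕ} [DecidableEq O] [DecidableEq A] (i : Fin n)
    (h : Hist O A i.val) (o : Fin n → O) (a : Fin n → A) :
    Decidable (ExtendsHist i h o a) := by
  unfold ExtendsHist; infer_instance

/-- The do-weighted value `W_D^π(α, hᵢ)`: the sum over all trajectories extending the
history `hᵢ` of `μ(s₁) ⬝ ∏_{k≤i} Ω(o_k|s_k) ⬝ α(aᵢ) ⬝ ∏_{k>i} Ω(o_k|s_k) π_k(a_k|h_k) ⬝
∏_k T(s_{k+1}|s_k,a_k) ⬝ U(s̄)`; it equals `P(o_{≤i}|Do(a_{<i}))` times the conditional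
expected utility given `hᵢ` when `aᵢ ∼ α` and later actions follow `π`. -/
noncomputable def doVal {S A O : Type} {n : ℕ} [Fintype S] [Fintype A] [Fintype O]
    [DecidableEq O] [DecidableEq A] [NeZero n] (D : POMDP S A O n) (π : Policy O A n)
    (i : Fin n) (h : Hist O A i.val) (α : A → ℝ) : ℝ :=
  ∑ s : Fin n → S, ∑ o : Fin n → O, ∑ a : Fin n → A,
    if ExtendsHist i h o a then
      D.μ (s 0) *
        (∏ k : Fin (i.val + 1),
          D.Ω (s ⟨k.val, by have := k.isLt; have := i.isLt; omega⟩)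
            (o ⟨k.val, by have := k.isLt; have := i.isLt; omega⟩)) *
        α (a i) *
        (∏ k ∈ univ.filter (fun k : Fin n => i < k), D.Ω (s k) (o k) * π k (histOf o a k) (a k)) *
        (∏ k : Fin (n - 1),
          D.T (s ⟨k.val, by have := k.isLt; omega⟩) (a ⟨k.val, by have := k.isLt; omega⟩)
            (s ⟨k.val + 1, by have := k.isLt; omega⟩)) *
        D.U s
    else 0

/-- The truncation of a history at time `i` to the (earlier) time `k < i`. -/
def truncHist {O A : Type} {n : ℕ} (i : Fin n) (h : Hist O A i.val) (k : Fin i.val) :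
    Hist O A k.val :=
  (fun m => h.1 ⟨m.val, by have := m.isLt; have := k.isLt; omega⟩,
   fun m => h.2 ⟨m.val, by have := m.isLt; have := k.isLt; omega⟩)

/-- `P(hᵢ; π)`: the probability of the history `hᵢ` under the policy `π` in `D`. -/
noncomputable def histProb {S A O : Type} {n : ℕ} [Fintype S] (D : POMDP S A O n)
    (π : Policy O A n) (i : Fin n) (h : Hist O A i.val) : ℝ :=
  ∑ s : Fin (i.val + 1) → S,
    D.μ (s 0) * (∏ k : Fin (i.val + 1), D.Ω (s k) (h.1 k)) *
      (∏ k : Fin i.val,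
        π ⟨k.val, by have := k.isLt; have := i.isLt; omega⟩ (truncHist i h k) (h.2 k)) *
      ∏ k : Fin i.val, D.T (s k.castSucc) (h.2 k) (s k.succ)

/-- Given two POMDPs sharing the same dynamics and differing only in their utility
functions, `harsanyiAgg w1 w2 D1 D2` is the shared POMDP equipped with the aggregated
utility function `w1·U¹ + w2·U²` (using the shared dynamics, taken from `D1`). -/
noncomputable def harsanyiAgg {S A O : Type} {n : ℕ} (w1 w2 : ℝ)
    (D1 D2 : POMDP S A O n) : POMDP S A O n where
  μ := D1.μ
  T := D1.T
  Ω := D1.Ω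
  U := fun s => w1 * D1.U s + w2 * D2.U s


section Aux

variable {S A O : Type} {n : ℕ}

/-- The probability weight contributed by the policy's own randomization along history `h`. -/
noncomputable def polWeight {O A : Type} {n : ℕ} (π : Policy O A n) (i : Fin n)
    (h : Hist O A i.val) : ℝ :=
  ∏ k : Fin i.val,
    π ⟨k.val, by have := k.isLt; have := i.isLt; omega⟩ (truncHist i h k) (h.2 k)

lemma polWeight_nonneg [Fintype A] {π : Policy O A n} (hπ : IsPolicy π) (i : Fin n)
    (h : Hist O A i.val) : 0 ≤ polWeight π i h :=
  Finset.prod_nonneg fun k _ => (hπ _ _).1 _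

lemma extendsHist_iff {i : Fin n} {h : Hist O A i.val} {o : Fin n → O} {a : Fin n → A} :
    ExtendsHist i h o a ↔ histOf o a i = h := by
  constructor
  · rintro ⟨h1, h2⟩
    exact Prod.ext (funext fun k => h1 k) (funext fun k => h2 k)
  · rintro rfl
    exact ⟨fun k => rfl, fun k => rfl⟩

lemma prod_fin_lt {M : Type} [CommMonoid M] {m : ℕ} (hm : m ≤ n) (f : Fin n → M) :
    ∏ k : Fin m, f ⟨k.val, lt_of_lt_of_le k.isLt hm⟩
      = ∏ k ∈ Finset.univ.filter (fun k : Fin n => k.val < m), f k := by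
  refine Finset.prod_bij' (fun k _ => (⟨k.val, lt_of_lt_of_le k.isLt hm⟩ : Fin n))
    (fun k hk => (⟨k.val, (Finset.mem_filter.mp hk).2⟩ : Fin m)) ?_ ?_ ?_ ?_ ?_
  · intro k _; simp [Finset.mem_filter, k.isLt]
  · intro k _; simp
  · intro k _; rfl
  · intro k _; rfl
  · intro k _; rfl

lemma prod_split_at {M : Type} [CommMonoid M] (i : Fin n) (f : Fin n → M) :
    ∏ k : Fin n, f k
      = (∏ k : Fin (i.val + 1), f ⟨k.val, by have := k.isLt; have := i.isLt; omega⟩) *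
        ∏ k ∈ Finset.univ.filter (fun k : Fin n => i < k), f k := by
  calc ∏ k : Fin n, f k
      = (∏ k ∈ Finset.univ.filter (fun k : Fin n => k.val < i.val + 1), f k) *
        ∏ k ∈ Finset.univ.filter (fun k : Fin n => ¬ k.val < i.val + 1), f k :=
        (Finset.prod_filter_mul_prod_filter_not Finset.univ _ f).symm
    _ = _ := by
        congr 1
        · exact (prod_fin_lt (by have := i.isLt; omega) f).symm
        · apply Finset.prod_congr _ (fun _ _ => rfl)
          apply Finset.filter_congr
          intro k _
          simp only [Fin.lt_def, not_lt, Nat.lt_succ_iff]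
          omega

end Aux
section Decomp

instance histFintype {O A : Type} [Fintype O] [Fintype A] {i : ℕ} : Fintype (Hist O A i) := by
  unfold Hist; infer_instance

instance histDecEq {O A : Type} [DecidableEq O] [DecidableEq A] {i : ℕ} :
    DecidableEq (Hist O A i) := by
  unfold Hist; infer_instance

variable {S A O : Type} [Fintype S] [Fintype A] [Fintype O] [DecidableEq O] [DecidableEq A]
  {n : ℕ} [NeZero n]

lemma pi_prod_split (π : Policy O A n) (i : Fin n) (o : Fin n → O) (a : Fin n → A) :
    (∏ k : Fin (i.val + 1),
        π ⟨k.val, by have := k.isLt; have := i.isLt; omega⟩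
          (histOf o a ⟨k.val, by have := k.isLt; have := i.isLt; omega⟩)
          (a ⟨k.val, by have := k.isLt; have := i.isLt; omega⟩))
      = polWeight π i (histOf o a i) * π i (histOf o a i) (a i) := by
  rw [Fin.prod_univ_castSucc]
  rfl

lemma traj_term_decomp (D : POMDP S A O n) (π : Policy O A n) (i : Fin n)
    (s : Fin n → S) (o : Fin n → O) (a : Fin n → A) :
    trajProb D π s o a * D.U s
      = polWeight π i (histOf o a i) *
        (D.μ (s 0) *
          (∏ k : Fin (i.val + 1),
            D.Ω (s ⟨k.val, by have := k.isLt; have := i.isLt; omega⟩)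
              (o ⟨k.val, by have := k.isLt; have := i.isLt; omega⟩)) *
          π i (histOf o a i) (a i) *
          (∏ k ∈ Finset.univ.filter (fun k : Fin n => i < k),
            D.Ω (s k) (o k) * π k (histOf o a k) (a k)) *
          (∏ k : Fin (n - 1),
            D.T (s ⟨k.val, by have := k.isLt; omega⟩) (a ⟨k.val, by have := k.isLt; omega⟩)
              (s ⟨k.val + 1, by have := k.isLt; omega⟩)) *
          D.U s) := by
  unfold trajProb
  rw [prod_split_at i (fun k => D.Ω (s k) (o k) * π k (histOf o a k) (a k))]
  rw [Finset.prod_mul_distrib]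
  rw [pi_prod_split π i o a]
  ring

lemma expUtil_decomp (D : POMDP S A O n) (π : Policy O A n) (i : Fin n) :
    expUtil D π = ∑ h : Hist O A i.val, polWeight π i h * doVal D π i h (π i h) := by
  unfold expUtil doVal
  simp only [Finset.mul_sum]
  conv_rhs => rw [Finset.sum_comm]
  refine Finset.sum_congr rfl fun s _ => ?_
  conv_rhs => rw [Finset.sum_comm]
  refine Finset.sum_congr rfl fun o _ => ?_
  conv_rhs => rw [Finset.sum_comm]
  refine Finset.sum_congr rfl fun a _ => ?_
  simp only [mul_ite, mul_zero, extendsHist_iff]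
  rw [Finset.sum_ite_eq]
  simp only [Finset.mem_univ, if_true]
  exact traj_term_decomp D π i s o a

end Decomp
section Improve

variable {S A O : Type} [Fintype S] [Fintype A] [Fintype O] [DecidableEq O] [DecidableEq A]
  {n : ℕ} [NeZero n]

omit [Fintype S] [Fintype O] [DecidableEq O] [DecidableEq A] [NeZero n] in
lemma polWeight_congr {π π' : Policy O A n} (i : Fin n)
    (hag : ∀ k : Fin n, k.val < i.val → π k = π' k) (h : Hist O A i.val) :
    polWeight π i h = polWeight π' i h :=
  Finset.prod_congr rfl fun k _ => by rw [hag _ k.isLt]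

lemma doVal_congr (D : POMDP S A O n) {π π' : Policy O A n} (i : Fin n)
    (hag : ∀ k : Fin n, i < k → π k = π' k) (h : Hist O A i.val) (α : A → ℝ) :
    doVal D π i h α = doVal D π' i h α := by
  unfold doVal
  refine Finset.sum_congr rfl fun s _ => Finset.sum_congr rfl fun o _ =>
    Finset.sum_congr rfl fun a _ => ?_
  split
  · have : (∏ k ∈ Finset.univ.filter (fun k : Fin n => i < k),
        D.Ω (s k) (o k) * π k (histOf o a k) (a k))
        = ∏ k ∈ Finset.univ.filter (fun k : Fin n => i < k),
        D.Ω (s k) (o k) * π' k (histOf o a k) (a k) :=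
      Finset.prod_congr rfl fun k hk => by rw [hag k (Finset.mem_filter.mp hk).2]
    rw [this]
  · rfl

/-- Hybrid policy: follow `π'` strictly before time `m`, and `π` from time `m` on. -/
noncomputable def hyb (π π' : Policy O A n) (m : ℕ) : Policy O A n :=
  fun k => if k.val < m then π' k else π k

lemma expUtil_le_of_local (D : POMDP S A O n) {π π' : Policy O A n} (hπ' : IsPolicy π')
    (hloc : ∀ (i : Fin n) (h : Hist O A i.val) (α : A → ℝ), IsDist α →
      doVal D π i h α ≤ doVal D π i h (π i h)) :
    expUtil D π' ≤ expUtil D π := by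
  have hn : 0 < n := Nat.pos_of_ne_zero (NeZero.ne n)
  have main : ∀ m, expUtil D (hyb π π' m) ≤ expUtil D π := by
    intro m
    induction m with
    | zero =>
      have : hyb π π' 0 = π := funext fun k => by simp [hyb]
      rw [this]
    | succ m ih =>
      by_cases hm : m < n
      · set i : Fin n := ⟨m, hm⟩ with hidef
        have hag1 : ∀ k : Fin n, k.val < i.val → hyb π π' (m+1) k = π' k := by
          intro k hk; simp only [hyb, hidef] at *; rw [if_pos (by omega)]
        have hag1' : ∀ k : Fin n, k.val < i.val → hyb π π' m k = π' k := by
          intro k hk; simp only [hyb, hidef] at *; rw [if_pos (by omega)]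
        have hag2 : ∀ k : Fin n, i < k → hyb π π' (m+1) k = π k := by
          intro k hk; simp only [hyb]
          rw [if_neg (by simp only [Fin.lt_def, hidef] at hk; omega)]
        have hag2' : ∀ k : Fin n, i < k → hyb π π' m k = π k := by
          intro k hk; simp only [hyb]
          rw [if_neg (by simp only [Fin.lt_def, hidef] at hk; omega)]
        have hival1 : hyb π π' (m+1) i = π' i := by
          simp only [hyb, hidef]; rw [if_pos (by omega)]
        have hival2 : hyb π π' m i = π i := by
          simp only [hyb, hidef]; rw [if_neg (by omega)]
        have e1 : expUtil D (hyb π π' (m+1))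
            = ∑ h : Hist O A i.val, polWeight π' i h * doVal D π i h (π' i h) := by
          rw [expUtil_decomp D _ i]
          refine Finset.sum_congr rfl fun h _ => ?_
          rw [polWeight_congr i hag1 h, hival1,
            doVal_congr D i hag2 h (π' i h)]
        have e2 : expUtil D (hyb π π' m)
            = ∑ h : Hist O A i.val, polWeight π' i h * doVal D π i h (π i h) := by
          rw [expUtil_decomp D _ i]
          refine Finset.sum_congr rfl fun h _ => ?_
          rw [polWeight_congr i hag1' h, hival2,
            doVal_congr D i hag2' h (π i h)]
        calc expUtil D (hyb π π' (m+1))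
            = ∑ h : Hist O A i.val, polWeight π' i h * doVal D π i h (π' i h) := e1
          _ ≤ ∑ h : Hist O A i.val, polWeight π' i h * doVal D π i h (π i h) :=
            Finset.sum_le_sum fun h _ => mul_le_mul_of_nonneg_left
              (hloc i h (π' i h) (hπ' i h)) (polWeight_nonneg hπ' i h)
          _ = expUtil D (hyb π π' m) := e2.symm
          _ ≤ expUtil D π := ih
      · have : hyb π π' (m+1) = hyb π π' m := funext fun k => by
          have := k.isLt
          simp only [hyb]
          rw [if_pos (by omega), if_pos (by omega)]
        rw [this]; exact ih
  have : π' = hyb π π' n := funext fun k => by simp [hyb, k.isLt]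
  rw [this]; exact main n

lemma local_of_global (D : POMDP S A O n) {π : Policy O A n} (hπ : IsPolicy π)
    (hglob : ∀ ρ : Policy O A n, IsPolicy ρ → expUtil D ρ ≤ expUtil D π)
    (i : Fin n) (h : Hist O A i.val) (hpw : 0 < polWeight π i h)
    (α : A → ℝ) (hα : IsDist α) :
    doVal D π i h α ≤ doVal D π i h (π i h) := by
  set π' : Policy O A n := Function.update π i (Function.update (π i) h α) with hπ'def
  have hne : ∀ k : Fin n, k ≠ i → π' k = π k := fun k hk => Function.update_of_ne hk _ _
  have hi' : π' i = Function.update (π i) h α := Function.update_self _ _ _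
  have hπ' : IsPolicy π' := by
    intro k h'
    by_cases hk : k = i
    · subst hk
      rw [hi']
      by_cases hh : h' = h
      · subst hh; rw [Function.update_self]; exact hα
      · rw [Function.update_of_ne hh]; exact hπ _ _
    · rw [hne k hk]; exact hπ _ _
  have hag1 : ∀ k : Fin n, k.val < i.val → π' k = π k := by
    intro k hk; exact hne k (by intro e; rw [e] at hk; omega)
  have hag2 : ∀ k : Fin n, i < k → π' k = π k := fun k hk => hne k hk.ne'
  have e1 : expUtil D π'
      = ∑ h' : Hist O A i.val, polWeight π i h' * doVal D π i h' (π' i h') := by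
    rw [expUtil_decomp D _ i]
    refine Finset.sum_congr rfl fun h' _ => ?_
    rw [polWeight_congr i hag1 h', doVal_congr D i hag2 h' (π' i h')]
  have e2 : expUtil D π
      = ∑ h' : Hist O A i.val, polWeight π i h' * doVal D π i h' (π i h') :=
    expUtil_decomp D π i
  have hdiff : expUtil D π' - expUtil D π
      = polWeight π i h * (doVal D π i h α - doVal D π i h (π i h)) := by
    rw [e1, e2, ← Finset.sum_sub_distrib]
    rw [Finset.sum_eq_single h]
    · rw [hi', Function.update_self]; ring
    · intro h' _ hh'
      have : π' i h' = π i h' := by rw [hi', Function.update_of_ne hh']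
      rw [this]; ring
    · intro habs; exact absurd (Finset.mem_univ h) habs
  have hle := hglob π' hπ'
  nlinarith [hpw, hle, hdiff]

lemma histProb_factor (D : POMDP S A O n) (π : Policy O A n) (i : Fin n)
    (h : Hist O A i.val) :
    histProb D π i h = polWeight π i h * doProb D i h := by
  unfold histProb doProb polWeight
  rw [Finset.mul_sum]
  exact Finset.sum_congr rfl fun s _ => by ring

end Improve
section Mix

variable {S A O : Type} [Fintype S] [Fintype A] [Fintype O] [DecidableEq O] [DecidableEq A]
  {n : ℕ} [NeZero n]

/-- The prefix product of policy probabilities along a fixed trajectory. -/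
noncomputable def prefProd (π : Policy O A n) (o : Fin n → O) (a : Fin n → A) (m : ℕ) : ℝ :=
  ∏ k ∈ Finset.univ.filter (fun k : Fin n => k.val < m), π k (histOf o a k) (a k)

omit [Fintype S] [Fintype O] [DecidableEq O] [DecidableEq A] [NeZero n] in
lemma prefProd_zero (π : Policy O A n) (o : Fin n → O) (a : Fin n → A) :
    prefProd π o a 0 = 1 := by
  unfold prefProd
  rw [show Finset.univ.filter (fun k : Fin n => k.val < 0) = ∅ from by
    ext k; simp]
  rfl

omit [Fintype S] [Fintype O] [DecidableEq O] [DecidableEq A] [NeZero n] in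
lemma prefProd_succ (π : Policy O A n) (o : Fin n → O) (a : Fin n → A) {m : ℕ} (hm : m < n) :
    prefProd π o a (m + 1)
      = π ⟨m, hm⟩ (histOf o a ⟨m, hm⟩) (a ⟨m, hm⟩) * prefProd π o a m := by
  unfold prefProd
  rw [show Finset.univ.filter (fun k : Fin n => k.val < m + 1)
      = insert (⟨m, hm⟩ : Fin n) (Finset.univ.filter (fun k : Fin n => k.val < m)) from by
    ext k; simp [Fin.ext_iff]; omega]
  rw [Finset.prod_insert (by simp)]

omit [Fintype S] [Fintype O] [DecidableEq O] [DecidableEq A] [NeZero n] in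
lemma prefProd_stable (π : Policy O A n) (o : Fin n → O) (a : Fin n → A) {m : ℕ} (hm : n ≤ m) :
    prefProd π o a (m + 1) = prefProd π o a m := by
  unfold prefProd
  congr 1
  ext k
  have := k.isLt
  simp
  omega

omit [Fintype S] [Fintype O] [DecidableEq O] [DecidableEq A] [NeZero n] in
lemma prefProd_top (π : Policy O A n) (o : Fin n → O) (a : Fin n → A) :
    prefProd π o a n = ∏ k : Fin n, π k (histOf o a k) (a k) := by
  unfold prefProd
  congr 1
  ext k
  simp [k.isLt]

omit [Fintype S] [Fintype O] [DecidableEq O] [DecidableEq A] [NeZero n] in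
lemma polWeight_histOf (π : Policy O A n) (i : Fin n) (o : Fin n → O) (a : Fin n → A) :
    polWeight π i (histOf o a i) = prefProd π o a i.val := by
  unfold polWeight prefProd
  rw [← prod_fin_lt (le_of_lt i.isLt) (fun k => π k (histOf o a k) (a k))]
  exact Finset.prod_congr rfl fun k _ => rfl

omit [Fintype S] [Fintype O] [DecidableEq O] [DecidableEq A] [NeZero n] in
lemma prefProd_nonneg [Fintype A] {π : Policy O A n} (hπ : IsPolicy π) (o : Fin n → O)
    (a : Fin n → A) (m : ℕ) : 0 ≤ prefProd π o a m :=
  Finset.prod_nonneg fun k _ => (hπ _ _).1 _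

/-- Kuhn-style mixture of two full-memory behavioural policies. -/
noncomputable def mixPol (l : ℝ) (πA πB : Policy O A n) : Policy O A n :=
  fun i h a =>
    if l * polWeight πA i h + (1 - l) * polWeight πB i h = 0 then πA i h a
    else (l * polWeight πA i h * πA i h a + (1 - l) * polWeight πB i h * πB i h a)
      / (l * polWeight πA i h + (1 - l) * polWeight πB i h)

omit [Fintype S] [Fintype O] [DecidableEq O] [DecidableEq A] [NeZero n] in
lemma isPolicy_mixPol [Fintype A] {l : ℝ} (hl : 0 ≤ l) (hl1 : l ≤ 1)
    {πA πB : Policy O A n} (hA : IsPolicy πA) (hB : IsPolicy πB) :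
    IsPolicy (mixPol l πA πB) := by
  intro i h
  set dA := l * polWeight πA i h with hdA
  set dB := (1 - l) * polWeight πB i h with hdB
  have hdA0 : 0 ≤ dA := mul_nonneg hl (polWeight_nonneg hA i h)
  have hdB0 : 0 ≤ dB := mul_nonneg (by linarith) (polWeight_nonneg hB i h)
  by_cases hd : dA + dB = 0
  · constructor
    · intro x; simp only [mixPol, ← hdA, ← hdB, if_pos hd]; exact (hA i h).1 x
    · simp only [mixPol, ← hdA, ← hdB, if_pos hd]; exact (hA i h).2
  · constructor
    · intro x
      simp only [mixPol, ← hdA, ← hdB, if_neg hd]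
      exact div_nonneg
        (add_nonneg (mul_nonneg hdA0 ((hA i h).1 x)) (mul_nonneg hdB0 ((hB i h).1 x)))
        (by positivity)
    · simp only [mixPol, ← hdA, ← hdB, if_neg hd]
      rw [← Finset.sum_div, Finset.sum_add_distrib, ← Finset.mul_sum, ← Finset.mul_sum,
        (hA i h).2, (hB i h).2, mul_one, mul_one]
      exact div_self hd

omit [Fintype S] [Fintype O] [DecidableEq O] [NeZero n] in
lemma mixPol_prod [Fintype A] {l : ℝ} (hl : 0 ≤ l) (hl1 : l ≤ 1)
    {πA πB : Policy O A n} (hA : IsPolicy πA) (hB : IsPolicy πB)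
    (o : Fin n → O) (a : Fin n → A) :
    ∏ k : Fin n, mixPol l πA πB k (histOf o a k) (a k)
      = l * ∏ k : Fin n, πA k (histOf o a k) (a k)
        + (1 - l) * ∏ k : Fin n, πB k (histOf o a k) (a k) := by
  have key : ∀ m : ℕ, prefProd (mixPol l πA πB) o a m
      = l * prefProd πA o a m + (1 - l) * prefProd πB o a m := by
    intro m
    induction m with
    | zero => simp [prefProd_zero]
    | succ m ih =>
      by_cases hm : m < n
      · set i : Fin n := ⟨m, hm⟩ with hidef
        rw [prefProd_succ _ _ _ hm, prefProd_succ _ _ _ hm, prefProd_succ _ _ _ hm, ih]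
        set PA := prefProd πA o a m with hPA
        set PB := prefProd πB o a m with hPB
        have hpwA : polWeight πA ⟨m, hm⟩ (histOf o a ⟨m, hm⟩) = PA := polWeight_histOf πA ⟨m, hm⟩ o a
        have hpwB : polWeight πB ⟨m, hm⟩ (histOf o a ⟨m, hm⟩) = PB := polWeight_histOf πB ⟨m, hm⟩ o a
        have hPA0 : 0 ≤ PA := prefProd_nonneg hA o a m
        have hPB0 : 0 ≤ PB := prefProd_nonneg hB o a m
        have hdA0 : 0 ≤ l * PA := mul_nonneg hl hPA0
        have hdB0 : 0 ≤ (1 - l) * PB := mul_nonneg (by linarith) hPB0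
        simp only [mixPol, hpwA, hpwB]
        by_cases hd : l * PA + (1 - l) * PB = 0
        · rw [if_pos hd]
          have h1 : l * PA = 0 := by linarith
          have h2 : (1 - l) * PB = 0 := by linarith
          linear_combination (πA ⟨m, hm⟩ (histOf o a ⟨m, hm⟩) (a ⟨m, hm⟩)
              - πB ⟨m, hm⟩ (histOf o a ⟨m, hm⟩) (a ⟨m, hm⟩)) * h2
        · rw [if_neg hd]
          field_simp
      · rw [prefProd_stable _ _ _ (by omega), prefProd_stable _ _ _ (by omega),
          prefProd_stable _ _ _ (by omega)]
        exact ih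
  have := key n
  rwa [prefProd_top, prefProd_top, prefProd_top] at this

lemma expUtil_mixPol (D : POMDP S A O n) {l : ℝ} (hl : 0 ≤ l) (hl1 : l ≤ 1)
    {πA πB : Policy O A n} (hA : IsPolicy πA) (hB : IsPolicy πB) :
    expUtil D (mixPol l πA πB) = l * expUtil D πA + (1 - l) * expUtil D πB := by
  have key : ∀ (s : Fin n → S) (o : Fin n → O) (a : Fin n → A),
      trajProb D (mixPol l πA πB) s o a * D.U s
        = l * (trajProb D πA s o a * D.U s) + (1 - l) * (trajProb D πB s o a * D.U s) := by
    intro s o a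
    unfold trajProb
    simp only [Finset.prod_mul_distrib]
    rw [mixPol_prod hl hl1 hA hB o a]
    ring
  unfold expUtil
  calc (∑ s : Fin n → S, ∑ o : Fin n → O, ∑ a : Fin n → A,
        trajProb D (mixPol l πA πB) s o a * D.U s)
      = ∑ s : Fin n → S, ∑ o : Fin n → O, ∑ a : Fin n → A,
          (l * (trajProb D πA s o a * D.U s) + (1 - l) * (trajProb D πB s o a * D.U s)) :=
        Finset.sum_congr rfl fun s _ => Finset.sum_congr rfl fun o _ =>
          Finset.sum_congr rfl fun a _ => key s o a
    _ = _ := by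
        simp only [Finset.sum_add_distrib, ← Finset.mul_sum]

end Mix
section Sep

variable {S A O : Type} [Fintype S] [Fintype A] [Fintype O] [DecidableEq O] [DecidableEq A]
  {n : ℕ} [NeZero n]

lemma expUtil_agg (D1 D2 : POMDP S A O n) (hμ : D1.μ = D2.μ) (hT : D1.T = D2.T)
    (hΩ : D1.Ω = D2.Ω) (w1 w2 : ℝ) (ρ : Policy O A n) :
    expUtil (harsanyiAgg w1 w2 D1 D2) ρ = w1 * expUtil D1 ρ + w2 * expUtil D2 ρ := by
  have htraj : ∀ (s : Fin n → S) (o : Fin n → O) (a : Fin n → A),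
      trajProb D1 ρ s o a = trajProb D2 ρ s o a := by
    intro s o a; unfold trajProb; rw [hμ, hT, hΩ]
  have htraj' : ∀ (s : Fin n → S) (o : Fin n → O) (a : Fin n → A),
      trajProb (harsanyiAgg w1 w2 D1 D2) ρ s o a = trajProb D1 ρ s o a := fun _ _ _ => rfl
  unfold expUtil
  calc (∑ s : Fin n → S, ∑ o : Fin n → O, ∑ a : Fin n → A,
        trajProb (harsanyiAgg w1 w2 D1 D2) ρ s o a * (harsanyiAgg w1 w2 D1 D2).U s)
      = ∑ s : Fin n → S, ∑ o : Fin n → O, ∑ a : Fin n → A,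
          (w1 * (trajProb D1 ρ s o a * D1.U s) + w2 * (trajProb D2 ρ s o a * D2.U s)) := by
        refine Finset.sum_congr rfl fun s _ => Finset.sum_congr rfl fun o _ =>
          Finset.sum_congr rfl fun a _ => ?_
        rw [htraj' s o a]
        show trajProb D1 ρ s o a * (w1 * D1.U s + w2 * D2.U s) = _
        rw [← htraj s o a]
        ring
    _ = _ := by simp only [Finset.sum_add_distrib, ← Finset.mul_sum]

lemma separation_2d {V : Set (ℝ × ℝ)} (hV : Convex ℝ V) {p : ℝ × ℝ} (hp : p ∈ V)
    (hdisj : ∀ q ∈ V, ¬(p.1 < q.1 ∧ p.2 < q.2)) :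
    ∃ w1 w2 : ℝ, 0 ≤ w1 ∧ 0 ≤ w2 ∧ w1 + w2 = 1 ∧
      ∀ q ∈ V, w1 * q.1 + w2 * q.2 ≤ w1 * p.1 + w2 * p.2 := by
  set B : Set (ℝ × ℝ) := Set.Ioi p.1 ×ˢ Set.Ioi p.2 with hBdef
  have hBopen : IsOpen B := (isOpen_Ioi).prod isOpen_Ioi
  have hBconv : Convex ℝ B := (convex_Ioi _).prod (convex_Ioi _)
  have hdis : Disjoint B V := Set.disjoint_left.mpr fun q hq hqV =>
    hdisj q hqV ⟨hq.1, hq.2⟩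
  obtain ⟨f, u, hfB, hfV⟩ := geometric_hahn_banach_open hBconv hBopen hV hdis
  set a1 : ℝ := -(f (1, 0)) with ha1
  set a2 : ℝ := -(f (0, 1)) with ha2
  have hflin : ∀ q : ℝ × ℝ, f q = -(a1 * q.1 + a2 * q.2) := by
    intro q
    have hq : q = q.1 • ((1 : ℝ), (0 : ℝ)) + q.2 • ((0 : ℝ), (1 : ℝ)) := by
      ext <;> simp
    rw [ha1, ha2]
    conv_lhs => rw [hq]
    rw [map_add, map_smul, map_smul]
    simp [smul_eq_mul]
    ring
  have hVle : ∀ q ∈ V, a1 * q.1 + a2 * q.2 ≤ -u := by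
    intro q hq
    have := hfV q hq
    rw [hflin q] at this
    linarith
  have hBgt : ∀ q : ℝ × ℝ, p.1 < q.1 → p.2 < q.2 → -u < a1 * q.1 + a2 * q.2 := by
    intro q h1 h2
    have hmem : q ∈ B := ⟨h1, h2⟩
    have := hfB q hmem
    rw [hflin q] at this
    linarith
  have ha1nn : 0 ≤ a1 := by
    by_contra hneg
    push_neg at hneg
    set X : ℝ := -u - (a1 * p.1 + a2 * (p.2 + 1)) with hX
    set t : ℝ := (|X| + 1) / (-a1) with ht
    have ht0 : 0 < t := div_pos (by positivity) (by linarith)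
    have hat : a1 * t = -(|X| + 1) := by
      rw [ht]
      field_simp
      rw [div_self (show a1 ≠ 0 by linarith)]
    have := hBgt (p.1 + t, p.2 + 1) (by show p.1 < p.1 + t; linarith) (by show p.2 < p.2 + 1; linarith)
    simp only at this
    have habs : -X ≤ |X| := neg_le_abs X
    nlinarith [this, hat, habs]
  have ha2nn : 0 ≤ a2 := by
    by_contra hneg
    push_neg at hneg
    set X : ℝ := -u - (a1 * (p.1 + 1) + a2 * p.2) with hX
    set t : ℝ := (|X| + 1) / (-a2) with ht
    have ht0 : 0 < t := div_pos (by positivity) (by linarith)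
    have hat : a2 * t = -(|X| + 1) := by
      rw [ht]
      field_simp
      rw [div_self (show a2 ≠ 0 by linarith)]
    have := hBgt (p.1 + 1, p.2 + t) (by show p.1 < p.1 + 1; linarith) (by show p.2 < p.2 + t; linarith)
    simp only at this
    have habs : -X ≤ |X| := neg_le_abs X
    nlinarith [this, hat, habs]
  have hsumpos : 0 < a1 + a2 := by
    rcases (lt_or_eq_of_le (add_nonneg ha1nn ha2nn)) with h | h
    · exact h
    · exfalso
      have h1 : a1 = 0 := by linarith
      have h2 : a2 = 0 := by linarith
      have hb := hBgt (p.1 + 1, p.2 + 1) (by show p.1 < p.1 + 1; linarith)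
        (by show p.2 < p.2 + 1; linarith)
      have hv := hVle p hp
      rw [h1, h2] at hb hv
      simp at hb hv
      linarith
  have hpge : -u ≤ a1 * p.1 + a2 * p.2 := by
    by_contra hlt
    push_neg at hlt
    set δ : ℝ := -u - (a1 * p.1 + a2 * p.2) with hδ
    have hδ0 : 0 < δ := by linarith
    set ε : ℝ := δ / (2 * (a1 + a2)) with hε
    have hε0 : 0 < ε := div_pos hδ0 (by linarith)
    have := hBgt (p.1 + ε, p.2 + ε) (by show p.1 < p.1 + ε; linarith)
      (by show p.2 < p.2 + ε; linarith)
    simp only at this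
    have hεval : ε * (a1 + a2) = δ / 2 := by
      rw [hε]; field_simp
    nlinarith [this, hεval]
  refine ⟨a1 / (a1 + a2), a2 / (a1 + a2), div_nonneg ha1nn (le_of_lt hsumpos),
    div_nonneg ha2nn (le_of_lt hsumpos), by field_simp, ?_⟩
  intro q hq
  have h1 := hVle q hq
  have h2 : a1 * q.1 + a2 * q.2 ≤ a1 * p.1 + a2 * p.2 := le_trans h1 hpge
  rw [div_mul_eq_mul_div, div_mul_eq_mul_div, ← add_div,
    div_mul_eq_mul_div, div_mul_eq_mul_div, ← add_div]
  gcongr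
end Sep
/-- Harsanyi aggregation corollary.  Let `D1`, `D2` be compatible POMDPs sharing the same
states, initial distribution, transitions and observation probabilities, differing only in
their utilities `U¹`, `U²`; let `D_w` be the shared POMDP with utility `w1·U¹ + w2·U²`.
(i) If a full-memory policy `π` is Pareto-optimal for `(D1, D2)`, then there exist weights
`w1, w2 ≥ 0` with `w1 + w2 = 1` such that for every time `i` and every history `hᵢ` of
positive probability under `π`, `πᵢ(−|hᵢ)` maximizes `α ↦ W_{D_w}^π(α,hᵢ)`.
(ii) If `w1, w2 > 0` with `w1 + w2 = 1` and `πᵢ(−|hᵢ)` maximizes `α ↦ W_{D_w}^π(α,hᵢ)` for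
every time `i` and every history `hᵢ`, then `π` is Pareto-optimal for `(D1, D2)`. -/
theorem harsanyi_aggregation
    {S A O : Type} [Fintype S] [Fintype A] [Fintype O] [DecidableEq O] [DecidableEq A]
    [Nonempty S] [Nonempty A] [Nonempty O] {n : ℕ} [NeZero n]
    (D1 D2 : POMDP S A O n) (hD1 : D1.Valid) (hD2 : D2.Valid)
    (hμ : D1.μ = D2.μ) (hT : D1.T = D2.T) (hΩ : D1.Ω = D2.Ω)
    (π : Policy O A n) (hπ : IsPolicy π) :
    (ParetoOptimal D1 D2 π →
      ∃ w1 w2 : ℝ, 0 ≤ w1 ∧ 0 ≤ w2 ∧ w1 + w2 = 1 ∧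
        ∀ (i : Fin n) (h : Hist O A i.val), 0 < histProb D1 π i h →
          ∀ α : A → ℝ, IsDist α →
            doVal (harsanyiAgg w1 w2 D1 D2) π i h α ≤
              doVal (harsanyiAgg w1 w2 D1 D2) π i h (π i h)) ∧
    (∀ w1 w2 : ℝ, 0 < w1 → 0 < w2 → w1 + w2 = 1 →
      (∀ (i : Fin n) (h : Hist O A i.val) (α : A → ℝ), IsDist α →
        doVal (harsanyiAgg w1 w2 D1 D2) π i h α ≤
          doVal (harsanyiAgg w1 w2 D1 D2) π i h (π i h)) →
      ParetoOptimal D1 D2 π) := by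
  constructor
  · -- Part (i): Pareto optimality yields Harsanyi weights.
    intro hpareto
    set V : Set (ℝ × ℝ) :=
      {p | ∃ ρ : Policy O A n, IsPolicy ρ ∧ p = (expUtil D1 ρ, expUtil D2 ρ)} with hVdef
    have hVconv : Convex ℝ V := by
      rintro p ⟨ρA, hA, rfl⟩ q ⟨ρB, hB, rfl⟩ θa θb hθa hθb hsum
      have hb : θb = 1 - θa := by linarith
      have h1 := expUtil_mixPol D1 hθa (by linarith) hA hB
      have h2 := expUtil_mixPol D2 hθa (by linarith) hA hB
      refine ⟨mixPol θa ρA ρB, isPolicy_mixPol hθa (by linarith) hA hB, ?_⟩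
      rw [h1, h2, hb]
      ext <;> dsimp <;> ring
    have hpV : ((expUtil D1 π, expUtil D2 π) : ℝ × ℝ) ∈ V := ⟨π, hπ, rfl⟩
    have hdisj : ∀ q ∈ V,
        ¬(((expUtil D1 π, expUtil D2 π) : ℝ × ℝ).1 < q.1 ∧
          ((expUtil D1 π, expUtil D2 π) : ℝ × ℝ).2 < q.2) := by
      rintro q ⟨ρ, hρ, rfl⟩ ⟨hgt1, hgt2⟩
      dsimp only at hgt1 hgt2
      rcases (hpareto ρ hρ).1 hgt1 with hc | hc <;> linarith
    obtain ⟨w1, w2, hw1, hw2, hwsum, hmax⟩ := separation_2d hVconv hpV hdisj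
    refine ⟨w1, w2, hw1, hw2, hwsum, ?_⟩
    intro i h hhist α hα
    have hglob : ∀ ρ : Policy O A n, IsPolicy ρ →
        expUtil (harsanyiAgg w1 w2 D1 D2) ρ ≤ expUtil (harsanyiAgg w1 w2 D1 D2) π := by
      intro ρ hρ
      rw [expUtil_agg D1 D2 hμ hT hΩ, expUtil_agg D1 D2 hμ hT hΩ]
      simpa using hmax (expUtil D1 ρ, expUtil D2 ρ) ⟨ρ, hρ, rfl⟩
    have hpw : 0 < polWeight π i h := by
      rcases (polWeight_nonneg hπ i h).lt_or_eq with hlt | heq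
      · exact hlt
      · exfalso
        rw [histProb_factor, ← heq, zero_mul] at hhist
        exact lt_irrefl 0 hhist
    exact local_of_global _ hπ hglob i h hpw α hα
  · -- Part (ii): local optimality for positive weights yields Pareto optimality.
    intro w1 w2 hw1 hw2 hwsum hloc ρ hρ
    have hle := expUtil_le_of_local (harsanyiAgg w1 w2 D1 D2) hρ hloc
    rw [expUtil_agg D1 D2 hμ hT hΩ, expUtil_agg D1 D2 hμ hT hΩ] at hle
    constructor
    · intro hgt
      right
      nlinarith [mul_pos hw1 (sub_pos.mpr hgt), hw2]
    · intro hgt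
      left
      nlinarith [mul_pos hw2 (sub_pos.mpr hgt), hw1]
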